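/- arXiv:2506.17531 — 3 statements merged into one kernel-verified Lean document; each statement's English description precedes it below -/
import Mathlib

section
/- Let n ≥ 2 and δ > 0 real with δ ≠ n/2. Then for all r > 1, the integral ∫_{-1}^{1} (s + coth r)^{-δ} (1 - s²)^{(n-2)/2} ds is bounded by C·(1 + e^{(2δ-n) r}) for a constant C depending only on n and δ. -/
open Real intervalIntegral

private lemma stmt_3_aux_neg (A B P Q E : ℝ) (hA : A ≤ Q * E) (hB : 0 ≤ B)
    (hP : 0 < P) (hQ : 0 < Q) (hE : 0 < E) : A - B ≤ (P + Q) * (1 + E) := by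
  nlinarith

private lemma stmt_3_aux_pos (A B P Q E : ℝ) (hA : A ≤ P) (hB : 0 ≤ B)
    (hP : 0 < P) (hQ : 0 < Q) (hE : 0 < E) : A - B ≤ (P + Q) * (1 + E) := by
  nlinarith

/-- For `n ≥ 2`, `δ > 0` with `δ ≠ n/2`, there is a constant `C` (depending only on
`n` and `δ`) such that for all `r > 1`,
`∫_{-1}^{1} (s + coth r)^{-δ} (1-s²)^{(n-2)/2} ds ≤ C (1 + e^{(2δ-n)r})`. -/
theorem stmt_3 (n : ℕ) (hn : 2 ≤ n) (δ : ℝ) (hδ : 0 < δ) (hδn : δ ≠ n / 2) :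
    ∃ C : ℝ, 0 < C ∧ ∀ r : ℝ, 1 < r →
      (∫ s in (-1 : ℝ)..1,
          (s + Real.cosh r / Real.sinh r) ^ (-δ) * (1 - s ^ 2) ^ (((n : ℝ) - 2) / 2))
        ≤ C * (1 + Real.exp ((2 * δ - n) * r)) := by
  set m : ℝ := ((n : ℝ) - 2) / 2 with hm
  have hn2 : (2 : ℝ) ≤ n := by exact_mod_cast hn
  have hm0 : 0 ≤ m := by simp only [hm]; linarith
  set p : ℝ := (n : ℝ) / 2 - δ with hp
  have hp0 : p ≠ 0 := by
    intro h; apply hδn; simp only [hp] at h; linarith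
  have hmp : m - δ + 1 = p := by simp only [hm, hp]; ring
  refine ⟨(2:ℝ) ^ m * ((3:ℝ) ^ p + (2:ℝ) ^ p) / |p|, by positivity, ?_⟩
  intro r hr
  have hr0 : (0:ℝ) < r := by linarith
  have hs : 0 < Real.sinh r := by positivity
  set a : ℝ := Real.cosh r / Real.sinh r with ha
  have ha1 : 1 < a := (one_lt_div hs).mpr (Real.sinh_lt_cosh r)
  have haeq : a - 1 = Real.exp (-r) / Real.sinh r := by
    rw [ha, div_sub_one (ne_of_gt hs), Real.cosh_sub_sinh]
  -- lower bound on a - 1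
  have hlow : 2 * Real.exp (-(2*r)) ≤ a - 1 := by
    rw [haeq, le_div_iff₀ hs]
    have h1 : Real.sinh r ≤ Real.exp r / 2 := by
      rw [Real.sinh_eq]
      have := Real.exp_pos (-r)
      linarith
    have h2 : Real.exp (-(2*r)) * Real.exp r = Real.exp (-r) := by
      rw [← Real.exp_add]; ring_nf
    nlinarith [Real.exp_pos (-(2*r)), Real.exp_pos (-r)]
  -- upper bound on a
  have hup : a ≤ 2 := by
    have h3 : Real.exp (-r) ≤ Real.sinh r := by
      rw [Real.sinh_eq]
      have he : (3:ℝ) ≤ Real.exp (2*r) := by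
        have := Real.add_one_le_exp (2*r)
        linarith
      have : 3 * Real.exp (-r) ≤ Real.exp (2*r) * Real.exp (-r) := by
        nlinarith [Real.exp_pos (-r)]
      rw [← Real.exp_add] at this
      have hrr : 2*r + -r = r := by ring
      rw [hrr] at this
      linarith
    have : a - 1 ≤ 1 := by
      rw [haeq, div_le_one hs]; exact h3
    linarith
  have hsa : ∀ s : ℝ, s ∈ Set.Icc (-1:ℝ) 1 → 0 < s + a := by
    intro s hs'
    have := hs'.1
    linarith
  -- pointwise bound
  have hb : ∀ s ∈ Set.Icc (-1:ℝ) 1,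
      (s + a) ^ (-δ) * (1 - s ^ 2) ^ m ≤ (2:ℝ) ^ m * (s + a) ^ (m - δ) := by
    intro s hs'
    obtain ⟨hs1, hs2⟩ := hs'
    have hpos := hsa s ⟨hs1, hs2⟩
    have h1 : (0:ℝ) ≤ 1 - s ^ 2 := by nlinarith
    have h2 : 1 - s ^ 2 ≤ 2 * (s + a) := by nlinarith
    have h3 : (1 - s ^ 2) ^ m ≤ (2 * (s + a)) ^ m :=
      Real.rpow_le_rpow h1 h2 hm0
    have h4 : (2 * (s + a)) ^ m = (2:ℝ) ^ m * (s + a) ^ m :=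
      Real.mul_rpow (by norm_num) (le_of_lt hpos)
    calc (s + a) ^ (-δ) * (1 - s ^ 2) ^ m
        ≤ (s + a) ^ (-δ) * ((2:ℝ) ^ m * (s + a) ^ m) := by
          apply mul_le_mul_of_nonneg_left _ (Real.rpow_nonneg (le_of_lt hpos) _)
          rw [← h4]; exact h3
      _ = (2:ℝ) ^ m * (s + a) ^ (m - δ) := by
          rw [show m - δ = -δ + m by ring, Real.rpow_add hpos]; ring
  -- integrability
  have hcont1 : ContinuousOn (fun s : ℝ => (s + a) ^ (-δ) * (1 - s ^ 2) ^ m)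
      (Set.uIcc (-1:ℝ) 1) := by
    rw [Set.uIcc_of_le (by norm_num : (-1:ℝ) ≤ 1)]
    apply ContinuousOn.mul
    · apply ContinuousOn.rpow_const (by fun_prop)
      intro s hs'
      exact Or.inl (ne_of_gt (hsa s hs'))
    · apply ContinuousOn.rpow_const (by fun_prop)
      intro s _
      exact Or.inr hm0
  have hcont2 : ContinuousOn (fun s : ℝ => (2:ℝ) ^ m * (s + a) ^ (m - δ))
      (Set.uIcc (-1:ℝ) 1) := by
    rw [Set.uIcc_of_le (by norm_num : (-1:ℝ) ≤ 1)]
    apply ContinuousOn.mul continuousOn_const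
    apply ContinuousOn.rpow_const (by fun_prop)
    intro s hs'
    exact Or.inl (ne_of_gt (hsa s hs'))
  have hmono := intervalIntegral.integral_mono_on (by norm_num : (-1:ℝ) ≤ 1)
    (hcont1.intervalIntegrable (μ := MeasureTheory.volume)) (hcont2.intervalIntegrable (μ := MeasureTheory.volume)) hb
  -- compute the RHS integral
  have hint : (∫ s in (-1:ℝ)..1, (2:ℝ) ^ m * (s + a) ^ (m - δ))
      = (2:ℝ) ^ m * (((a+1) ^ p - (a-1) ^ p) / p) := by
    rw [intervalIntegral.integral_const_mul]
    congr 1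
    have := intervalIntegral.integral_comp_add_right (a := (-1:ℝ)) (b := 1)
      (fun x : ℝ => x ^ (m - δ)) a
    rw [this]
    rw [integral_rpow]
    · rw [hmp]; ring_nf
    · right
      constructor
      · intro h; apply hp0; rw [← hmp, h]; ring
      · rw [Set.uIcc_of_le (by linarith : (-1:ℝ)+a ≤ 1+a)]
        intro h
        have := h.1
        linarith
  rw [hint] at hmono
  refine le_trans hmono ?_
  -- now case on sign of p
  have hexp : Real.exp (-(2*r)) ^ p = Real.exp ((-(2*r)) * p) := by
    rw [← Real.exp_mul]
  have hkey : Real.exp ((2*δ - n) * r) = Real.exp (-(2*r)) ^ p := by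
    rw [hexp]; congr 1; rw [hp]; ring
  have hepos := Real.exp_pos ((2*δ - (n:ℝ)) * r)
  have h2m : (0:ℝ) < (2:ℝ) ^ m := Real.rpow_pos_of_pos (by norm_num) m
  have h3p : (0:ℝ) < (3:ℝ) ^ p := Real.rpow_pos_of_pos (by norm_num) p
  have h2p : (0:ℝ) < (2:ℝ) ^ p := Real.rpow_pos_of_pos (by norm_num) p
  have hexp2 : (2 * Real.exp (-(2*r))) ^ p = (2:ℝ) ^ p * Real.exp ((2*δ - n) * r) := by
    rw [Real.mul_rpow (by norm_num) (le_of_lt (Real.exp_pos _)), hkey]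
  rcases lt_or_gt_of_ne hp0 with hneg | hpos
  · -- p < 0
    have habs : |p| = -p := abs_of_neg hneg
    have hq : (0:ℝ) < -p := by linarith
    have ha1p : (0:ℝ) ≤ (a+1) ^ p := Real.rpow_nonneg (by linarith) p
    have hE : (0:ℝ) < Real.exp ((2*δ - (n:ℝ)) * r) := Real.exp_pos _
    have hb1 : (a-1) ^ p ≤ (2:ℝ) ^ p * Real.exp ((2*δ - n) * r) := by
      rw [← hexp2]
      exact Real.rpow_le_rpow_of_nonpos (by positivity) hlow (le_of_lt hneg)
    have lhs_eq : (2:ℝ) ^ m * (((a+1) ^ p - (a-1) ^ p) / p)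
        = ((2:ℝ) ^ m * ((a-1) ^ p - (a+1) ^ p)) / (-p) := by
      field_simp
      ring
    rw [habs, lhs_eq, div_mul_eq_mul_div, div_le_div_iff₀ hq hq]
    have h₁ : (2:ℝ) ^ m * (a-1) ^ p ≤ ((2:ℝ) ^ m * (2:ℝ) ^ p) * Real.exp ((2*δ - n) * r) :=
      (mul_le_mul_of_nonneg_left hb1 h2m.le).trans_eq (mul_assoc _ _ _).symm
    have hXY : (2:ℝ) ^ m * ((a-1) ^ p - (a+1) ^ p)
        ≤ (2:ℝ) ^ m * ((3:ℝ) ^ p + (2:ℝ) ^ p) * (1 + Real.exp ((2*δ - n) * r)) := by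
      have := stmt_3_aux_neg ((2:ℝ) ^ m * (a-1) ^ p) ((2:ℝ) ^ m * (a+1) ^ p)
        ((2:ℝ) ^ m * (3:ℝ) ^ p) ((2:ℝ) ^ m * (2:ℝ) ^ p) (Real.exp ((2*δ - n) * r))
        h₁ (mul_nonneg h2m.le ha1p) (mul_pos h2m h3p) (mul_pos h2m h2p) hE
      convert this using 1 <;> ring
    exact mul_le_mul_of_nonneg_right hXY hq.le
  · -- p > 0
    have habs : |p| = p := abs_of_pos hpos
    have hb1 : (a+1) ^ p ≤ (3:ℝ) ^ p := Real.rpow_le_rpow (by linarith) (by linarith) hpos.le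
    have ha1p : (0:ℝ) ≤ (a-1) ^ p := Real.rpow_nonneg (by linarith) p
    have hE : (0:ℝ) < Real.exp ((2*δ - (n:ℝ)) * r) := Real.exp_pos _
    have lhs_eq : (2:ℝ) ^ m * (((a+1) ^ p - (a-1) ^ p) / p)
        = ((2:ℝ) ^ m * ((a+1) ^ p - (a-1) ^ p)) / p := by ring
    rw [habs, lhs_eq, div_mul_eq_mul_div, div_le_div_iff₀ hpos hpos]
    have h₁ : (2:ℝ) ^ m * (a+1) ^ p ≤ (2:ℝ) ^ m * (3:ℝ) ^ p :=
      mul_le_mul_of_nonneg_left hb1 h2m.le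
    have hXY : (2:ℝ) ^ m * ((a+1) ^ p - (a-1) ^ p)
        ≤ (2:ℝ) ^ m * ((3:ℝ) ^ p + (2:ℝ) ^ p) * (1 + Real.exp ((2*δ - n) * r)) := by
      have := stmt_3_aux_pos ((2:ℝ) ^ m * (a+1) ^ p) ((2:ℝ) ^ m * (a-1) ^ p)
        ((2:ℝ) ^ m * (3:ℝ) ^ p) ((2:ℝ) ^ m * (2:ℝ) ^ p) (Real.exp ((2*δ - n) * r))
        h₁ (mul_nonneg h2m.le ha1p) (mul_pos h2m h3p) (mul_pos h2m h2p) hE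
      convert this using 1 <;> ring
    exact mul_le_mul_of_nonneg_right hXY hpos.le
end

section
/- Let n ≥ 2. For all r > 1, the integral ∫_{-1}^{1} (s + coth r)^{-n/2} (1 - s²)^{(n-2)/2} ds is bounded by C·r for a constant C depending only on n. -/
open Real intervalIntegral

/-- For `n ≥ 2`, there is a constant `C` (depending only on `n`) such that for
all `r > 1`, `∫_{-1}^{1} (s + coth r)^{-n/2} (1-s²)^{(n-2)/2} ds ≤ C r`. -/
theorem stmt_4 (n : ℕ) (hn : 2 ≤ n) :
    ∃ C : ℝ, 0 < C ∧ ∀ r : ℝ, 1 < r →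
      (∫ s in (-1 : ℝ)..1,
          (s + Real.cosh r / Real.sinh r) ^ (-(n : ℝ) / 2) * (1 - s ^ 2) ^ (((n : ℝ) - 2) / 2))
        ≤ C * r := by
  set e : ℝ := ((n : ℝ) - 2) / 2 with he
  have hn2 : (2 : ℝ) ≤ (n : ℝ) := by exact_mod_cast hn
  have he0 : 0 ≤ e := by rw [he]; linarith
  refine ⟨3 * 2 ^ e, by positivity, ?_⟩
  intro r hr
  have hr0 : 0 < r := by linarith
  set c : ℝ := Real.cosh r / Real.sinh r with hcdef
  have hsinh : 0 < Real.sinh r := Real.sinh_pos_iff.2 hr0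
  have hc1 : 1 < c := by
    rw [hcdef, lt_div_iff₀ hsinh, one_mul]
    exact Real.sinh_lt_cosh r
  have huIcc : Set.uIcc (-1 : ℝ) 1 = Set.Icc (-1 : ℝ) 1 :=
    Set.uIcc_of_le (by norm_num)
  have hpos : ∀ x ∈ Set.Icc (-1 : ℝ) 1, 0 < x + c := fun x hx => by
    have := hx.1; linarith
  -- pointwise bound
  have key : ∀ s ∈ Set.Icc (-1 : ℝ) 1,
      (s + c) ^ (-(n : ℝ) / 2) * (1 - s ^ 2) ^ e ≤ 2 ^ e * (s + c)⁻¹ := by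
    intro s hs
    obtain ⟨hs1, hs2⟩ := hs
    have hsc : 0 < s + c := by linarith
    have h1 : (1 - s ^ 2 : ℝ) ≤ 2 * (s + c) := by nlinarith
    have h2 : (1 - s ^ 2 : ℝ) ^ e ≤ (2 * (s + c)) ^ e :=
      Real.rpow_le_rpow (by nlinarith) h1 he0
    calc (s + c) ^ (-(n : ℝ) / 2) * (1 - s ^ 2) ^ e
        ≤ (s + c) ^ (-(n : ℝ) / 2) * (2 * (s + c)) ^ e :=
          mul_le_mul_of_nonneg_left h2 (Real.rpow_nonneg hsc.le _)
      _ = 2 ^ e * ((s + c) ^ (-(n : ℝ) / 2) * (s + c) ^ e) := by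
          rw [Real.mul_rpow (by norm_num) hsc.le]; ring
      _ = 2 ^ e * (s + c)⁻¹ := by
          rw [← Real.rpow_add hsc, ← Real.rpow_neg_one (s + c)]
          congr 1
          rw [he]; ring
  -- continuity / integrability
  have hf : ContinuousOn
      (fun s : ℝ => (s + c) ^ (-(n : ℝ) / 2) * (1 - s ^ 2) ^ e)
      (Set.uIcc (-1 : ℝ) 1) := by
    rw [huIcc]
    apply ContinuousOn.mul
    · exact ContinuousOn.rpow_const (by fun_prop)
        (fun x hx => Or.inl (hpos x hx).ne')
    · exact ContinuousOn.rpow_const (by fun_prop) (fun x _ => Or.inr he0)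
  have hg : ContinuousOn (fun s : ℝ => 2 ^ e * (s + c)⁻¹)
      (Set.uIcc (-1 : ℝ) 1) := by
    rw [huIcc]
    exact continuousOn_const.mul
      (ContinuousOn.inv₀ (by fun_prop) (fun x hx => (hpos x hx).ne'))
  -- compare integrals
  have hmono := intervalIntegral.integral_mono_on (μ := MeasureTheory.volume) (by norm_num : (-1:ℝ) ≤ 1)
    (hf.intervalIntegrable) (hg.intervalIntegrable) key
  -- compute the majorant's integral
  have hcalc : (∫ s in (-1 : ℝ)..1, 2 ^ e * (s + c)⁻¹) = 2 ^ e * (2 * r) := by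
    rw [intervalIntegral.integral_const_mul]
    have h1 : (∫ s in (-1 : ℝ)..1, (s + c)⁻¹)
        = ∫ x in (-1 + c)..(1 + c), x⁻¹ :=
      intervalIntegral.integral_comp_add_right (fun x => x⁻¹) c
    rw [h1, integral_inv]
    · have hc0 : c - 1 ≠ 0 := by linarith
      have hne : Real.cosh r - Real.sinh r ≠ 0 :=
        sub_ne_zero.2 (Real.sinh_lt_cosh r).ne'
      have : (1 + c) / (-1 + c) = Real.exp r / Real.exp (-r) := by
        rw [hcdef, ← Real.sinh_add_cosh, ← Real.cosh_sub_sinh]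
        rw [div_eq_div_iff (by rw [hcdef] at hc1; linarith) hne]
        field_simp
        linarith [Real.cosh_sub_sinh r]
      rw [this, ← Real.exp_sub, Real.log_exp]
      ring
    · rw [Set.uIcc_of_le (by linarith : -1 + c ≤ 1 + c)]
      rintro ⟨h0, -⟩
      linarith
  have hrle : 2 ^ e * (2 * r) ≤ 3 * 2 ^ e * r := by
    have h2e : (0:ℝ) < 2 ^ e := Real.rpow_pos_of_pos (by norm_num) e
    nlinarith
  calc (∫ s in (-1 : ℝ)..1,
          (s + c) ^ (-(n : ℝ) / 2) * (1 - s ^ 2) ^ e)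
      ≤ ∫ s in (-1 : ℝ)..1, 2 ^ e * (s + c)⁻¹ := hmono
    _ = 2 ^ e * (2 * r) := hcalc
    _ ≤ 3 * 2 ^ e * r := hrle
end

section
/- Let n ≥ 1 and 0 < t ≤ 1. Then φ_0(t) := C_n (sinh t)^{1-n} ∫_{-t}^{t} (cosh t − cosh s)^{n/2−1} ds is bounded above and below by positive constants depending only on n (uniformly in t ∈ (0,1]). -/
/-!
For `0 ≤ s ≤ t ≤ 1`, the identity `cosh t - cosh s = 2 sinh ((t + s) / 2) sinh ((t - s) / 2)`
and `u ≤ sinh u ≤ u e^u` show that `cosh t - cosh s` agrees with `t (t - s)` up to the factor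
`e²`, and `sinh t` agrees with `t` up to the factor `e`. Raising to powers and integrating over
`[0, t]` (the integrand is even in `s`), `φ₀(t)` agrees up to a factor depending only on `n` with
`2 C_n t^{1-n} ∫₀ᵗ t^p (t - s)^p ds = 2 C_n / (p + 1)`, where `p = n/2 - 1 > -1`; the powers of `t`
cancel because `2p + 1 = n - 1`. Comparing with `t (t - s)` rather than `(t² - s²) / 2` keeps the
model integral elementary also for `n = 1`, where the integrand is singular at `s = ±t`.
-/

open Real MeasureTheory intervalIntegral

noncomputable def Cconst (n : ℕ) : ℝ :=
  2 ^ ((n : ℝ) / 2 - 1) * Real.Gamma ((n + 1) / 2) / (Real.sqrt Real.pi * Real.Gamma (n / 2))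

def WithinFactor (L x y : ℝ) : Prop := x ≤ L * y ∧ y ≤ L * x

namespace WithinFactor

variable {L M x y x' y' : ℝ}

theorem symm (h : WithinFactor L x y) : WithinFactor L y x := And.symm h

theorem mul (h : WithinFactor L x y) (h' : WithinFactor M x' y')
    (hx : 0 ≤ x) (hy : 0 ≤ y) (hx' : 0 ≤ x') (hy' : 0 ≤ y') :
    WithinFactor (L * M) (x * x') (y * y') :=
  ⟨(mul_le_mul h.1 h'.1 hx' (hx.trans h.1)).trans_eq (mul_mul_mul_comm _ _ _ _),
    (mul_le_mul h.2 h'.2 hy' (hy.trans h.2)).trans_eq (mul_mul_mul_comm _ _ _ _)⟩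

theorem const_mul (h : WithinFactor L x y) {c : ℝ} (hc : 0 ≤ c) :
    WithinFactor L (c * x) (c * y) :=
  ⟨(mul_le_mul_of_nonneg_left h.1 hc).trans_eq (mul_left_comm _ _ _),
    (mul_le_mul_of_nonneg_left h.2 hc).trans_eq (mul_left_comm _ _ _)⟩

theorem nonneg (h : WithinFactor L x y) (hL : 0 < L) (hy : 0 ≤ y) : 0 ≤ x :=
  nonneg_of_mul_nonneg_right (hy.trans h.2) hL

theorem rpow_le (h : WithinFactor L x y) (hx : 0 ≤ x) (hL : 1 ≤ L) (p : ℝ) :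
    y ^ p ≤ L ^ |p| * x ^ p := by
  have hL0 : 0 < L := by linarith
  rcases hx.eq_or_lt with rfl | hx
  · have hy : y = 0 := le_antisymm (by simpa using h.2) (by nlinarith [h.1])
    subst hy
    exact le_mul_of_one_le_left (rpow_nonneg le_rfl p) (one_le_rpow hL (abs_nonneg p))
  have hy : 0 < y := by nlinarith [h.1]
  rcases le_or_gt 0 p with hp | hp
  · calc y ^ p ≤ (L * x) ^ p := rpow_le_rpow hy.le h.2 hp
      _ = L ^ |p| * x ^ p := by rw [mul_rpow hL0.le hx.le, abs_of_nonneg hp]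
  · calc y ^ p ≤ (x / L) ^ p :=
          rpow_le_rpow_of_nonpos (by positivity) (by rw [div_le_iff₀ hL0]; linarith [h.1]) hp.le
      _ = L ^ |p| * x ^ p := by
          rw [div_rpow hx.le hL0.le, abs_of_neg hp, rpow_neg hL0.le]; ring

theorem rpow (h : WithinFactor L x y) (hx : 0 ≤ x) (hL : 1 ≤ L) (p : ℝ) :
    WithinFactor (L ^ |p|) (x ^ p) (y ^ p) :=
  have hy : 0 ≤ y := by nlinarith [h.1]
  ⟨h.symm.rpow_le hy hL p, h.rpow_le hx hL p⟩

theorem intervalIntegrable {f g : ℝ → ℝ} {a b : ℝ} (hab : a ≤ b)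
    (hf : AEStronglyMeasurable f (volume.restrict (Set.Ioc a b)))
    (hg : IntervalIntegrable g volume a b) (hf0 : ∀ s ∈ Set.Icc a b, 0 ≤ f s)
    (h : ∀ s ∈ Set.Icc a b, WithinFactor L (f s) (g s)) :
    IntervalIntegrable f volume a b := by
  refine (hg.const_mul L).mono_fun' (by rwa [Set.uIoc_of_le hab]) ?_
  filter_upwards [ae_restrict_mem measurableSet_uIoc] with s hs
  rw [Set.uIoc_of_le hab] at hs
  rw [norm_of_nonneg (hf0 s (Set.Ioc_subset_Icc_self hs))]
  exact (h s (Set.Ioc_subset_Icc_self hs)).1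

theorem integral {f g : ℝ → ℝ} {a b : ℝ} (hab : a ≤ b) (hfi : IntervalIntegrable f volume a b)
    (hg : IntervalIntegrable g volume a b) (h : ∀ s ∈ Set.Icc a b, WithinFactor L (f s) (g s)) :
    WithinFactor L (∫ s in a..b, f s) (∫ s in a..b, g s) := by
  constructor
  · rw [← intervalIntegral.integral_const_mul]
    exact integral_mono_on hab hfi (hg.const_mul L) fun s hs => (h s hs).1
  · rw [← intervalIntegral.integral_const_mul]
    exact integral_mono_on hab hg (hfi.const_mul L) fun s hs => (h s hs).2

end WithinFactor

theorem integral_neg_self_eq_two_mul_of_even {f : ℝ → ℝ} {a : ℝ} (hf : ∀ x, f (-x) = f x)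
    (hint : IntervalIntegrable f volume 0 a) :
    ∫ x in -a..a, f x = 2 * ∫ x in 0..a, f x := by
  have hneg : IntervalIntegrable f volume (-a) 0 := by
    simpa [hf] using ((IntervalIntegrable.iff_comp_neg (f := f) (a := 0) (b := a)).mp hint).symm
  have hsymm : ∫ x in -a..0, f x = ∫ x in 0..a, f x := by
    simpa [hf] using (integral_comp_neg (a := 0) (b := a) f).symm
  rw [← integral_add_adjacent_intervals hneg hint, hsymm, two_mul]

theorem integral_sub_rpow {p : ℝ} (hp : -1 < p) (t : ℝ) :
    ∫ s in (0 : ℝ)..t, (t - s) ^ p = t ^ (p + 1) / (p + 1) := by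
  rw [integral_comp_sub_left (fun s => s ^ p), sub_self, sub_zero, integral_rpow (Or.inl hp),
    zero_rpow (by linarith), sub_zero]

theorem intervalIntegrable_sub_rpow {p : ℝ} (hp : -1 < p) (t : ℝ) :
    IntervalIntegrable (fun s => (t - s) ^ p) volume 0 t := by
  simpa using ((intervalIntegrable_rpow' hp (a := 0) (b := t)).comp_sub_left t).symm

theorem cosh_sub_cosh (t s : ℝ) :
    cosh t - cosh s = 2 * sinh ((t + s) / 2) * sinh ((t - s) / 2) := by
  have h1 := cosh_add ((t + s) / 2) ((t - s) / 2)
  have h2 := cosh_sub ((t + s) / 2) ((t - s) / 2)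
  rw [show (t + s) / 2 + (t - s) / 2 = t by ring] at h1
  rw [show (t + s) / 2 - (t - s) / 2 = s by ring] at h2
  linear_combination h1 - h2

theorem sinh_le_mul_exp (x : ℝ) : sinh x ≤ x * exp x := by
  have h := add_one_le_exp (-(2 * x))
  have hsplit : exp (-x) = exp x * exp (-(2 * x)) := by rw [← exp_add]; ring_nf
  rw [sinh_eq, hsplit]
  nlinarith [mul_le_mul_of_nonneg_left h (exp_pos x).le]

theorem mul_sub_le_two_mul_cosh_sub_cosh {s t : ℝ} (hs : 0 ≤ s) (hst : s ≤ t) :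
    t * (t - s) ≤ 2 * (cosh t - cosh s) := by
  have hu : t / 2 ≤ sinh ((t + s) / 2) :=
    le_trans (by linarith) (self_le_sinh_iff.mpr (by linarith : 0 ≤ (t + s) / 2))
  have hv : (t - s) / 2 ≤ sinh ((t - s) / 2) := self_le_sinh_iff.mpr (by linarith)
  rw [cosh_sub_cosh]
  nlinarith [mul_le_mul hu hv (by linarith) (by linarith)]

theorem cosh_sub_cosh_le {s t : ℝ} (hs : 0 ≤ s) (hst : s ≤ t) :
    cosh t - cosh s ≤ exp (2 * t) * (t * (t - s)) := by
  have hu : sinh ((t + s) / 2) ≤ t * exp t :=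
    (sinh_le_mul_exp _).trans (mul_le_mul (by linarith)
      (exp_le_exp.mpr (by linarith)) (exp_pos _).le (by linarith))
  have hv : sinh ((t - s) / 2) ≤ (t - s) / 2 * exp t :=
    (sinh_le_mul_exp _).trans
      (mul_le_mul_of_nonneg_left (exp_le_exp.mpr (by linarith)) (by linarith))
  have hexp : exp (2 * t) = exp t * exp t := by rw [← exp_add]; ring_nf
  rw [cosh_sub_cosh, hexp]
  nlinarith [mul_le_mul hu hv (sinh_nonneg_iff.mpr (by linarith))
    (mul_nonneg (by linarith) (exp_pos t).le)]

theorem withinFactor_cosh_sub_cosh {s t : ℝ} (hs : 0 ≤ s) (hst : s ≤ t) (ht : t ≤ 1) :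
    WithinFactor (exp 2) (cosh t - cosh s) (t * (t - s)) := by
  have hx : 0 ≤ t * (t - s) := mul_nonneg (by linarith) (by linarith)
  have hlower := mul_sub_le_two_mul_cosh_sub_cosh hs hst
  have hexp2 : 2 ≤ exp 2 := by linarith [add_one_le_exp 2]
  constructor
  · exact (cosh_sub_cosh_le hs hst).trans
      (mul_le_mul_of_nonneg_right (exp_le_exp.mpr (by linarith)) hx)
  · nlinarith

theorem withinFactor_sinh_self {t : ℝ} (ht : 0 ≤ t) (ht1 : t ≤ 1) :
    WithinFactor (exp 1) (sinh t) t := by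
  have hsinh : t ≤ sinh t := self_le_sinh_iff.mpr ht
  constructor
  · exact (sinh_le_mul_exp t).trans (by nlinarith [exp_le_exp.mpr ht1])
  · nlinarith [add_one_le_exp 1]

theorem withinFactor_integral_cosh_sub_cosh_rpow {p t : ℝ} (hp : -1 < p) (ht : 0 < t)
    (ht1 : t ≤ 1) :
    WithinFactor (exp 2 ^ |p|) (∫ s in (-t)..t, (cosh t - cosh s) ^ p)
      (2 * (t ^ (2 * p + 1) / (p + 1))) := by
  have hf0 : ∀ s ∈ Set.Icc 0 t, 0 ≤ cosh t - cosh s := fun s hs =>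
    sub_nonneg.mpr (cosh_le_cosh.mpr (by rw [abs_of_nonneg hs.1, abs_of_pos ht]; exact hs.2))
  have hpoint : ∀ s ∈ Set.Icc 0 t,
      WithinFactor (exp 2 ^ |p|) ((cosh t - cosh s) ^ p) (t ^ p * (t - s) ^ p) := fun s hs => by
    rw [← mul_rpow ht.le (sub_nonneg.mpr hs.2)]
    exact (withinFactor_cosh_sub_cosh hs.1 hs.2 ht1).rpow (hf0 s hs) (one_le_exp (by norm_num)) p
  have hg : IntervalIntegrable (fun s => t ^ p * (t - s) ^ p) volume 0 t :=
    (intervalIntegrable_sub_rpow hp t).const_mul _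
  have hfi : IntervalIntegrable (fun s => (cosh t - cosh s) ^ p) volume 0 t :=
    WithinFactor.intervalIntegrable ht.le
      ((measurable_const.sub continuous_cosh.measurable).pow_const p).aestronglyMeasurable hg
      (fun s hs => rpow_nonneg (hf0 s hs) p) hpoint
  have hg_integral : ∫ s in (0 : ℝ)..t, t ^ p * (t - s) ^ p = t ^ (2 * p + 1) / (p + 1) := by
    rw [intervalIntegral.integral_const_mul, integral_sub_rpow hp, mul_div_assoc', ← rpow_add ht]
    ring_nf
  rw [integral_neg_self_eq_two_mul_of_even (fun s => by rw [cosh_neg]) hfi, ← hg_integral]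
  exact (WithinFactor.integral ht.le hfi hg hpoint).const_mul zero_le_two

theorem withinFactor_sinh_rpow_mul_integral {p t : ℝ} (hp : -1 < p) (ht : 0 < t) (ht1 : t ≤ 1) :
    WithinFactor (exp 1 ^ |2 * p + 1| * exp 2 ^ |p|)
      (sinh t ^ (-(2 * p + 1)) * ∫ s in (-t)..t, (cosh t - cosh s) ^ p) (2 / (p + 1)) := by
  have hsinh := (withinFactor_sinh_self ht.le ht1).rpow (sinh_nonneg_iff.mpr ht.le)
    (one_le_exp zero_le_one) (-(2 * p + 1))
  have hint := withinFactor_integral_cosh_sub_cosh_rpow hp ht ht1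
  have hp1 : 0 < p + 1 := by linarith
  rw [abs_neg] at hsinh
  convert hsinh.mul hint (rpow_nonneg (sinh_nonneg_iff.mpr ht.le) _) (rpow_nonneg ht.le _)
    (hint.nonneg (by positivity) (by positivity)) (by positivity) using 1
  rw [rpow_neg ht.le]
  field_simp

theorem Cconst_pos {n : ℕ} (hn : 0 < n) : 0 < Cconst n := by
  have hn' : (0 : ℝ) < n := Nat.cast_pos.mpr hn
  unfold Cconst
  have := Gamma_pos_of_pos (by positivity : (0 : ℝ) < (n + 1) / 2)
  have := Gamma_pos_of_pos (by positivity : (0 : ℝ) < n / 2)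
  positivity

/-- For `n ≥ 1`, the quantity
`φ_0(t) = C_n (sinh t)^{1-n} ∫_{-t}^{t} (cosh t - cosh s)^{n/2-1} ds`
is bounded above and below by positive constants depending only on `n`,
uniformly in `t ∈ (0,1]`. -/
theorem stmt_17 (n : ℕ) (hn : 1 ≤ n) :
    ∃ c C : ℝ, 0 < c ∧ 0 < C ∧ ∀ t : ℝ, 0 < t → t ≤ 1 →
      c ≤ Cconst n * Real.sinh t ^ ((1 : ℝ) - n) *
          ∫ s in (-t)..t, (Real.cosh t - Real.cosh s) ^ ((n : ℝ) / 2 - 1) ∧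
      Cconst n * Real.sinh t ^ ((1 : ℝ) - n) *
          ∫ s in (-t)..t, (Real.cosh t - Real.cosh s) ^ ((n : ℝ) / 2 - 1) ≤ C := by
  have hp : -1 < (n : ℝ) / 2 - 1 := by
    have : (1 : ℝ) ≤ n := Nat.one_le_cast.mpr hn
    linarith
  set p : ℝ := (n : ℝ) / 2 - 1
  set L : ℝ := exp 1 ^ |2 * p + 1| * exp 2 ^ |p|
  set A : ℝ := Cconst n * (2 / (p + 1))
  have hL : 0 < L := by positivity
  have hA : 0 < A := mul_pos (Cconst_pos hn) (div_pos two_pos (by linarith))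
  refine ⟨A / L, L * A, div_pos hA hL, mul_pos hL hA, fun t ht ht1 => ?_⟩
  have h := (withinFactor_sinh_rpow_mul_integral hp ht ht1).const_mul (Cconst_pos hn).le
  rw [show (1 : ℝ) - n = -(2 * p + 1) by ring, mul_assoc]
  exact ⟨(div_le_iff₀' hL).mpr h.2, h.1⟩
end
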